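/- Let K ⊆ ℝⁿ be a closed convex unconditional set and let P = {x ∈ ℝⁿ : |x₁| ≤ p} be a strip with p ≥ 0. If λ_n(K) = λ_n(P), then λ_n(tK) ≥ λ_n(tP) for all t ≥ 1. -/

import Mathlib

/-!
A convex unconditional set is solid: it contains every point whose coordinates are dominated in
absolute value by those of one of its points. For a solid measurable `A ⊆ ℝⁿ` and `t ≥ 1` one has
`λ_n((tA)ᶜ) ≤ λ_n(Aᶜ)^t`, by induction on `n`, slicing along the first coordinate: the slice
measures `H(s) = λ_{n-1}((A_s)ᶜ)` are even in `s` and nondecreasing in `|s|`, and for such `H`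
`∫₀^∞ e^{-s} H(s/t)^t ds ≤ (∫₀^∞ e^{-s} H(s) ds)^t`.
That one-dimensional inequality holds because `g(u) = e^{-u} H(u)` is bounded by its own tail
mass `Φ(u) = ∫_u^∞ g`, so `t ∫ g^t ≤ t ∫ Φ^{t-1} g ≤ Φ(0)^t`, the last step by a layer-cake
comparison of the law of `Φ` under `g(u) du` with the uniform law on `(0, Φ(0)]`.
For the strip equality holds, `λ_n((tP)ᶜ) = e^{-tp} = λ_n(Pᶜ)^t`, so `λ_n(Kᶜ) = λ_n(Pᶜ)` gives
`λ_n((tK)ᶜ) ≤ λ_n((tP)ᶜ)`.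
-/

open MeasureTheory Real Set
open scoped Pointwise

/-- The standard exponential measure `λ_n` on `ℝⁿ`, with density
`2⁻ⁿ exp(-|x|₁)` with respect to Lebesgue measure. -/
noncomputable def lamR (n : ℕ) : MeasureTheory.Measure (Fin n → ℝ) :=
  MeasureTheory.volume.withDensity fun x =>
    ENNReal.ofReal (((2 : ℝ) ^ n)⁻¹ * Real.exp (-(∑ i, |x i|)))

open scoped ENNReal
open LatticeOrderedAddCommGroup

theorem measure_eq_iSup_measure_Iic_of_isLowerSet (μ : Measure ℝ) {S : Set ℝ} (hS : IsLowerSet S) :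
    μ S = ⨆ a : S, μ (Iic (a : ℝ)) := by
  -- gives `S` the order topology, so that `atTop` on `S` is countably generated
  have : OrdConnected S := hS.ordConnected
  have hS_eq : S = ⋃ a : S, Iic (a : ℝ) := by
    ext x
    simp only [mem_iUnion, mem_Iic, Subtype.exists, exists_prop]
    exact ⟨fun hx => ⟨x, hx, le_rfl⟩, fun ⟨a, ha, hxa⟩ => hS hxa ha⟩
  conv_lhs => rw [hS_eq]
  exact Monotone.measure_iUnion fun a b hab => Iic_subset_Iic.mpr hab

theorem measure_setOf_lt_measure_Ioi_le (μ : Measure ℝ) (c : ℝ≥0∞) :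
    μ {a | c < μ (Ioi a)} ≤ μ univ - c := by
  have hlower : IsLowerSet {a | c < μ (Ioi a)} := fun a b hba ha =>
    ha.trans_le (measure_mono (Ioi_subset_Ioi hba))
  rw [measure_eq_iSup_measure_Iic_of_isLowerSet μ hlower]
  refine iSup_le fun ⟨a, ha⟩ => ENNReal.le_sub_of_add_le_right ha.ne_top ?_
  calc μ (Iic a) + c ≤ μ (Iic a) + μ (Ioi a) := by gcongr; exact ha.le
    _ = μ univ := by rw [← compl_Iic, measure_add_measure_compl measurableSet_Iic]

theorem measure_setOf_lt_toReal_measure_Ioi_le (μ : Measure ℝ) [IsFiniteMeasure μ] {c : ℝ}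
    (hc : 0 ≤ c) : μ {u | c < (μ (Ioi u)).toReal} ≤ ENNReal.ofReal ((μ univ).toReal - c) := by
  have hset : {u | c < (μ (Ioi u)).toReal} = {u | ENNReal.ofReal c < μ (Ioi u)} := by
    ext u
    simp only [mem_ofPred_eq, ENNReal.ofReal_lt_iff_lt_toReal hc (measure_ne_top μ _)]
  rw [hset, ENNReal.ofReal_sub _ hc, ENNReal.ofReal_toReal (measure_ne_top μ _)]
  exact measure_setOf_lt_measure_Ioi_le μ _

theorem lintegral_rpow_le_of_measure_lt_le {α β : Type*} [MeasurableSpace α] [MeasurableSpace β]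
    {μ : Measure α} {ν : Measure β} {f : α → ℝ} {g : β → ℝ}
    (hf_nn : 0 ≤ᵐ[μ] f) (hf : AEMeasurable f μ) (hg_nn : 0 ≤ᵐ[ν] g) (hg : AEMeasurable g ν)
    {p : ℝ} (hp : 0 < p) (hfg : ∀ c > 0, μ {a | c < f a} ≤ ν {b | c < g b}) :
    ∫⁻ a, ENNReal.ofReal (f a ^ p) ∂μ ≤ ∫⁻ b, ENNReal.ofReal (g b ^ p) ∂ν := by
  rw [lintegral_rpow_eq_lintegral_meas_lt_mul μ hf_nn hf hp,
    lintegral_rpow_eq_lintegral_meas_lt_mul ν hg_nn hg hp]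
  gcongr ENNReal.ofReal p * ?_
  refine setLIntegral_mono' measurableSet_Ioi fun c hc => ?_
  gcongr
  exact hfg c hc

theorem lintegral_measure_Ioi_rpow_le (μ : Measure ℝ) [IsFiniteMeasure μ] {p : ℝ} (hp : 0 ≤ p) :
    ∫⁻ u, μ (Ioi u) ^ p ∂μ ≤ μ univ ^ (p + 1) / ENNReal.ofReal (p + 1) := by
  rcases hp.eq_or_lt with rfl | hp
  · simp
  set M := (μ univ).toReal
  have hM : 0 ≤ M := ENNReal.toReal_nonneg
  -- under `μ`, the tail function `u ↦ μ (Ioi u)` is dominated by the uniform law on `(0, M]`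
  have hdom : ∀ c > (0 : ℝ), μ {u | c < (μ (Ioi u)).toReal}
      ≤ volume.restrict (Ioc 0 M) {x | c < x} := fun c hc => by
    rw [show {x : ℝ | c < x} = Ioi c from rfl, Measure.restrict_apply measurableSet_Ioi,
      inter_comm, Ioc_inter_Ioi, sup_of_le_right hc.le, Real.volume_Ioc]
    exact measure_setOf_lt_toReal_measure_Ioi_le μ hc.le
  have hanti : Antitone fun u => (μ (Ioi u)).toReal := fun a b hab =>
    ENNReal.toReal_mono (measure_ne_top μ _) (measure_mono (Ioi_subset_Ioi hab))
  calc ∫⁻ u, μ (Ioi u) ^ p ∂μ = ∫⁻ u, ENNReal.ofReal ((μ (Ioi u)).toReal ^ p) ∂μ := by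
        congr! 2 with u
        rw [← ENNReal.ofReal_rpow_of_nonneg ENNReal.toReal_nonneg hp.le,
          ENNReal.ofReal_toReal (measure_ne_top μ _)]
    _ ≤ ∫⁻ x in Ioc 0 M, ENNReal.ofReal (x ^ p) :=
        lintegral_rpow_le_of_measure_lt_le (ae_of_all _ fun u => ENNReal.toReal_nonneg)
          hanti.measurable.aemeasurable
          ((ae_restrict_iff' measurableSet_Ioc).mpr (ae_of_all _ fun x hx => hx.1.le))
          measurable_id.aemeasurable hp hdom
    _ = ENNReal.ofReal (M ^ (p + 1) / (p + 1)) := by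
        rw [← ofReal_integral_eq_lintegral_ofReal, ← intervalIntegral.integral_of_le hM,
          integral_rpow (Or.inl (by linarith)), Real.zero_rpow (by positivity), sub_zero]
        · exact (intervalIntegral.intervalIntegrable_rpow' (by linarith)).1
        · exact (ae_restrict_iff' measurableSet_Ioc).mpr
            (ae_of_all _ fun x hx => Real.rpow_nonneg hx.1.le p)
    _ = μ univ ^ (p + 1) / ENNReal.ofReal (p + 1) := by
        rw [ENNReal.ofReal_div_of_pos (by positivity),
          ← ENNReal.ofReal_rpow_of_nonneg hM (by positivity),
          ENNReal.ofReal_toReal (measure_ne_top μ _)]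

theorem setLIntegral_Ioi_zero_comp_mul_left (f : ℝ → ℝ≥0∞) {a : ℝ} (ha : 0 < a) :
    ∫⁻ x in Ioi 0, f (a * x) = ENNReal.ofReal a⁻¹ * ∫⁻ x in Ioi 0, f x := by
  have hmp : MeasurePreserving (a * ·) volume (ENNReal.ofReal |a⁻¹| • volume) :=
    ⟨measurable_const_mul a, Real.map_volume_mul_left ha.ne'⟩
  have hpre : (a * ·) ⁻¹' Ioi 0 = Ioi (0 : ℝ) := by
    ext x; simp [mul_pos_iff_of_pos_left ha]
  conv_lhs => rw [← hpre]
  rw [hmp.setLIntegral_comp_preimage_emb (measurableEmbedding_mulLeft₀ ha.ne'),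
    Measure.restrict_smul, lintegral_smul_measure, abs_of_pos (inv_pos.mpr ha), smul_eq_mul]

theorem setLIntegral_Ioi_exp_neg {a : ℝ} :
    ∫⁻ s in Ioi a, ENNReal.ofReal (exp (-s)) = ENNReal.ofReal (exp (-a)) := by
  rw [← ofReal_integral_eq_lintegral_ofReal, integral_exp_neg_Ioi]
  · exact (exp_neg_integrableOn_Ioi a one_pos).congr_fun (fun s _ => by simp) measurableSet_Ioi
  · exact ae_of_all _ fun s => (exp_pos _).le

theorem lintegral_eq_two_mul_setLIntegral_Ioi_of_even {f : ℝ → ℝ≥0∞} (heven : ∀ x, f (-x) = f x) :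
    ∫⁻ x, f x = 2 * ∫⁻ x in Ioi 0, f x := by
  have hneg : ∫⁻ x in Iic 0, f x = ∫⁻ x in Ioi 0, f x := by
    rw [← lintegral_indicator measurableSet_Iic, ← lintegral_neg_eq_self,
      setLIntegral_congr Ioi_ae_eq_Ici, ← lintegral_indicator measurableSet_Ici]
    refine lintegral_congr fun x => ?_
    by_cases hx : 0 ≤ x <;> simp [indicator, hx, heven]
  rw [← lintegral_add_compl _ measurableSet_Ioi, compl_Ioi, hneg, two_mul]

theorem ofReal_mul_setLIntegral_rpow_le {g : ℝ → ℝ≥0∞} (hg : Measurable g)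
    (hg_fin : ∫⁻ u in Ioi 0, g u ≠ ∞) (hg_tail : ∀ u > 0, g u ≤ ∫⁻ s in Ioi u, g s)
    {t : ℝ} (ht : 1 ≤ t) :
    ENNReal.ofReal t * ∫⁻ u in Ioi 0, g u ^ t ≤ (∫⁻ u in Ioi 0, g u) ^ t := by
  have ht0 : 0 < t := one_pos.trans_le ht
  set ν := (volume.restrict (Ioi 0)).withDensity g
  have hν_univ : ν univ = ∫⁻ u in Ioi 0, g u := by
    rw [withDensity_apply _ MeasurableSet.univ, Measure.restrict_univ]
  have : IsFiniteMeasure ν := ⟨hν_univ ▸ hg_fin.lt_top⟩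
  have hν_Ioi : ∀ u > 0, ν (Ioi u) = ∫⁻ s in Ioi u, g s := fun u hu => by
    rw [withDensity_apply _ measurableSet_Ioi, Measure.restrict_restrict measurableSet_Ioi,
      inter_eq_left.mpr (Ioi_subset_Ioi hu.le)]
  have htail : Measurable fun u => ν (Ioi u) ^ (t - 1) :=
    (Antitone.measurable fun a b hab => measure_mono (Ioi_subset_Ioi hab)).pow_const _
  calc ENNReal.ofReal t * ∫⁻ u in Ioi 0, g u ^ t
      ≤ ENNReal.ofReal t * ∫⁻ u in Ioi 0, g u * ν (Ioi u) ^ (t - 1) := by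
        gcongr ENNReal.ofReal t * ?_
        refine setLIntegral_mono' measurableSet_Ioi fun u hu => ?_
        calc g u ^ t = g u ^ ((1 : ℝ) + (t - 1)) := by rw [add_sub_cancel]
          _ = g u * g u ^ (t - 1) := by
              rw [ENNReal.rpow_add_of_nonneg _ _ zero_le_one (sub_nonneg.mpr ht), ENNReal.rpow_one]
          _ ≤ g u * ν (Ioi u) ^ (t - 1) := by
              rw [hν_Ioi u hu]
              gcongr
              exact hg_tail u hu
    _ = ENNReal.ofReal t * ∫⁻ u, ν (Ioi u) ^ (t - 1) ∂ν := by
        rw [lintegral_withDensity_eq_lintegral_mul _ hg htail]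
        rfl
    _ ≤ ENNReal.ofReal t * (ν univ ^ t / ENNReal.ofReal t) := by
        gcongr
        simpa using lintegral_measure_Ioi_rpow_le ν (sub_nonneg.mpr ht)
    _ = (∫⁻ u in Ioi 0, g u) ^ t := by
        rw [ENNReal.mul_div_cancel (ENNReal.ofReal_pos.mpr ht0).ne' ENNReal.ofReal_ne_top, hν_univ]

theorem exp_neg_mul_le_setLIntegral_Ioi {H : ℝ → ℝ≥0∞} (hH_mono : MonotoneOn H (Ici 0)) {u : ℝ}
    (hu : 0 ≤ u) :
    ENNReal.ofReal (exp (-u)) * H u ≤ ∫⁻ s in Ioi u, ENNReal.ofReal (exp (-s)) * H s := by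
  rw [← setLIntegral_Ioi_exp_neg, ← lintegral_mul_const _ measurable_neg.exp.ennreal_ofReal]
  refine setLIntegral_mono' measurableSet_Ioi fun s hs => ?_
  gcongr
  exact hH_mono (mem_Ici.mpr hu) (mem_Ici.mpr (hu.trans (le_of_lt hs))) (le_of_lt hs)

theorem setLIntegral_exp_neg_mul_rpow_le {H : ℝ → ℝ≥0∞} (hH : Measurable H)
    (hH_le : ∀ s, H s ≤ 1) (hH_mono : MonotoneOn H (Ici 0)) {t : ℝ} (ht : 1 ≤ t) :
    ∫⁻ s in Ioi 0, ENNReal.ofReal (exp (-s)) * H (t⁻¹ * s) ^ t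
      ≤ (∫⁻ s in Ioi 0, ENNReal.ofReal (exp (-s)) * H s) ^ t := by
  have ht0 : 0 < t := one_pos.trans_le ht
  have hfin : ∫⁻ s in Ioi 0, ENNReal.ofReal (exp (-s)) * H s ≠ ∞ := by
    refine ne_top_of_le_ne_top (ENNReal.ofReal_ne_top (r := exp (-0))) ?_
    rw [← setLIntegral_Ioi_exp_neg]
    exact setLIntegral_mono' measurableSet_Ioi fun s _ => mul_le_of_le_one_right' (hH_le s)
  calc ∫⁻ s in Ioi 0, ENNReal.ofReal (exp (-s)) * H (t⁻¹ * s) ^ t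
      = ∫⁻ s in Ioi 0, (fun u => ENNReal.ofReal (exp (-(t * u))) * H u ^ t) (t⁻¹ * s) := by
        simp only [mul_inv_cancel_left₀ ht0.ne']
    _ = ENNReal.ofReal t * ∫⁻ u in Ioi 0, (ENNReal.ofReal (exp (-u)) * H u) ^ t := by
        rw [setLIntegral_Ioi_zero_comp_mul_left
          (fun u => ENNReal.ofReal (exp (-(t * u))) * H u ^ t) (inv_pos.mpr ht0), inv_inv]
        congr 1
        refine lintegral_congr fun u => ?_
        rw [ENNReal.mul_rpow_of_nonneg _ _ ht0.le,
          ENNReal.ofReal_rpow_of_nonneg (exp_pos _).le ht0.le, ← exp_mul, neg_mul, mul_comm u t]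
    _ ≤ _ := ofReal_mul_setLIntegral_rpow_le (measurable_neg.exp.ennreal_ofReal.mul hH) hfin
        (fun u hu => exp_neg_mul_le_setLIntegral_Ioi hH_mono hu.le) ht

noncomputable def expDensity (n : ℕ) (x : Fin n → ℝ) : ℝ≥0∞ :=
  ENNReal.ofReal (((2 : ℝ) ^ n)⁻¹ * exp (-(∑ i, |x i|)))

theorem lamR_eq_withDensity (n : ℕ) : lamR n = volume.withDensity (expDensity n) := rfl

theorem measurable_expDensity (n : ℕ) : Measurable (expDensity n) := by
  unfold expDensity
  fun_prop

theorem expDensity_cons {n : ℕ} (s : ℝ) (y : Fin n → ℝ) :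
    expDensity (n + 1) (Fin.cons s y) = ENNReal.ofReal (2⁻¹ * exp (-|s|)) * expDensity n y := by
  rw [expDensity, expDensity, ← ENNReal.ofReal_mul (by positivity), Fin.sum_univ_succ]
  simp only [Fin.cons_zero, Fin.cons_succ, neg_add, exp_add, pow_succ, mul_inv]
  ring_nf

def slice {n : ℕ} (A : Set (Fin (n + 1) → ℝ)) (s : ℝ) : Set (Fin n → ℝ) :=
  {y | Fin.cons s y ∈ A}

theorem slice_compl {n : ℕ} (A : Set (Fin (n + 1) → ℝ)) (s : ℝ) :
    slice Aᶜ s = (slice A s)ᶜ := rfl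

theorem measurePreserving_cons (n : ℕ) :
    MeasurePreserving (fun q : ℝ × (Fin n → ℝ) => (Fin.cons q.1 q.2 : Fin (n + 1) → ℝ))
      (volume.prod volume) volume := by
  have hcons : ⇑(MeasurableEquiv.piFinSuccAbove (fun _ : Fin (n + 1) => ℝ) 0).symm
      = fun q : ℝ × (Fin n → ℝ) => (Fin.cons q.1 q.2 : Fin (n + 1) → ℝ) := by
    funext q
    simp only [MeasurableEquiv.piFinSuccAbove_symm_apply, Fin.insertNthEquiv_zero]
    rfl
  exact hcons ▸ (volume_preserving_piFinSuccAbove (fun _ : Fin (n + 1) => ℝ) 0).symm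

theorem MeasurableSet.slice {n : ℕ} {A : Set (Fin (n + 1) → ℝ)} (hA : MeasurableSet A) (s : ℝ) :
    MeasurableSet (slice A s) :=
  measurable_prodMk_left ((measurePreserving_cons n).measurable hA)

theorem lamR_succ {n : ℕ} {A : Set (Fin (n + 1) → ℝ)} (hA : MeasurableSet A) :
    lamR (n + 1) A = ∫⁻ s, ENNReal.ofReal (2⁻¹ * exp (-|s|)) * lamR n (slice A s) := by
  have hind : Measurable (A.indicator (expDensity (n + 1))) :=
    (measurable_expDensity _).indicator hA
  rw [lamR_eq_withDensity, withDensity_apply _ hA, ← lintegral_indicator hA,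
    ← (measurePreserving_cons n).lintegral_comp hind,
    lintegral_prod (fun q => A.indicator (expDensity (n + 1)) (Fin.cons q.1 q.2))
      (hind.comp (measurePreserving_cons n).measurable).aemeasurable]
  refine lintegral_congr fun s => ?_
  rw [lamR_eq_withDensity, withDensity_apply _ (hA.slice s), ← lintegral_indicator (hA.slice s),
    ← lintegral_const_mul _ ((measurable_expDensity n).indicator (hA.slice s))]
  refine lintegral_congr fun y => ?_
  by_cases hy : y ∈ slice A s
  · simp [indicator_of_mem hy, indicator_of_mem (show Fin.cons s y ∈ A from hy), expDensity_cons]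
  · simp [indicator_of_notMem hy, indicator_of_notMem (show Fin.cons s y ∉ A from hy)]

theorem lamR_succ_of_slice_neg {n : ℕ} {A : Set (Fin (n + 1) → ℝ)} (hA : MeasurableSet A)
    (heven : ∀ s, slice A (-s) = slice A s) :
    lamR (n + 1) A = ∫⁻ s in Ioi 0, ENNReal.ofReal (exp (-s)) * lamR n (slice A s) := by
  rw [lamR_succ hA, lintegral_eq_two_mul_setLIntegral_Ioi_of_even fun s => by rw [abs_neg, heven],
    ← lintegral_const_mul' _ _ ENNReal.ofNat_ne_top]
  refine setLIntegral_congr_fun measurableSet_Ioi fun s hs => ?_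
  rw [← mul_assoc, abs_of_pos hs, ← ENNReal.ofReal_ofNat, ← ENNReal.ofReal_mul zero_le_two,
    ← mul_assoc, mul_inv_cancel₀ two_ne_zero, one_mul]

instance isProbabilityMeasure_lamR (n : ℕ) : IsProbabilityMeasure (lamR n) := by
  refine ⟨?_⟩
  induction n with
  | zero =>
    rw [lamR_eq_withDensity, withDensity_apply _ MeasurableSet.univ, Measure.restrict_univ]
    simp [expDensity, volume_pi]
  | succ n ih =>
    rw [lamR_succ_of_slice_neg MeasurableSet.univ fun _ => rfl]
    simp only [slice, mem_univ, ofPred_true, ih, mul_one, setLIntegral_Ioi_exp_neg, neg_zero,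
      exp_zero, ENNReal.ofReal_one]

theorem measurable_lamR_slice {n : ℕ} {A : Set (Fin (n + 1) → ℝ)} (hA : MeasurableSet A) :
    Measurable fun s => lamR n (slice A s) :=
  measurable_measure_prodMk_left ((measurePreserving_cons n).measurable hA)

theorem slice_smul {n : ℕ} {t : ℝ} (ht : t ≠ 0) (A : Set (Fin (n + 1) → ℝ)) (s : ℝ) :
    slice (t • A) s = t • slice A (t⁻¹ * s) := by
  ext y
  have hcons : t⁻¹ • (Fin.cons s y : Fin (n + 1) → ℝ) = Fin.cons (t⁻¹ * s) (t⁻¹ • y) := by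
    ext i
    refine Fin.cases ?_ (fun j => ?_) i <;> simp
  simp only [slice, mem_ofPred_eq, mem_smul_set_iff_inv_smul_mem₀ ht, hcons]

theorem smul_setOf_abs_le {n : ℕ} {t : ℝ} (ht : 0 < t) (i : Fin n) (q : ℝ) :
    t • {x : Fin n → ℝ | |x i| ≤ q} = {x | |x i| ≤ t * q} := by
  ext x
  simp only [mem_smul_set_iff_inv_smul_mem₀ ht.ne', mem_ofPred_eq, Pi.smul_apply, smul_eq_mul,
    abs_mul, abs_inv, abs_of_pos ht, inv_mul_le_iff₀ ht]

theorem lamR_compl_setOf_abs_le {n : ℕ} {q : ℝ} (hq : 0 ≤ q) :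
    lamR (n + 1) {x | |x 0| ≤ q}ᶜ = ENNReal.ofReal (exp (-q)) := by
  have hslice : ∀ s, slice {x : Fin (n + 1) → ℝ | |x 0| ≤ q}ᶜ s = {_y | q < |s|} := fun s => by
    ext y
    simp [slice]
  rw [lamR_succ_of_slice_neg (measurableSet_le (measurable_pi_apply 0).abs measurable_const).compl
    fun s => by rw [hslice, hslice, abs_neg]]
  have hind : ∀ s ∈ Ioi (0 : ℝ), ENNReal.ofReal (exp (-s)) * lamR n (slice {x | |x 0| ≤ q}ᶜ s)
      = (Ioi q).indicator (fun s => ENNReal.ofReal (exp (-s))) s := fun s hs => by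
    by_cases h : q < s <;> simp [hslice, abs_of_pos (show (0 : ℝ) < s from hs), h]
  rw [setLIntegral_congr_fun measurableSet_Ioi hind, lintegral_indicator measurableSet_Ioi,
    Measure.restrict_restrict measurableSet_Ioi, inter_eq_left.mpr (Ioi_subset_Ioi hq),
    setLIntegral_Ioi_exp_neg]

theorem lamR_compl_smul_setOf_abs_le {n : ℕ} {t q : ℝ} (ht : 0 < t) (hq : 0 ≤ q) :
    lamR (n + 1) (t • {x | |x 0| ≤ q})ᶜ = lamR (n + 1) {x | |x 0| ≤ q}ᶜ ^ t := by
  rw [smul_setOf_abs_le ht, lamR_compl_setOf_abs_le (by positivity), lamR_compl_setOf_abs_le hq,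
    ENNReal.ofReal_rpow_of_nonneg (exp_pos _).le ht.le, ← exp_mul, neg_mul, mul_comm]

theorem Convex.update_mem_of_abs_le {ι : Type*} [DecidableEq ι] {K : Set (ι → ℝ)}
    (hK : Convex ℝ K) {z : ι → ℝ} (hz : z ∈ K) {j : ι} (hflip : Function.update z j (-z j) ∈ K)
    {v : ℝ} (hv : |v| ≤ |z j|) : Function.update z j v ∈ K := by
  have hline : Convex ℝ {w : ℝ | Function.update z j w ∈ K} := by
    intro a ha b hb μ ν hμ hν hμν
    have hupd : Function.update z j (μ • a + ν • b)
        = μ • Function.update z j a + ν • Function.update z j b := by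
      ext i
      rcases eq_or_ne i j with rfl | hi
      · simp
      · simp [hi, ← add_mul, hμν]
    simpa only [mem_ofPred_eq, hupd] using hK ha hb hμ hν hμν
  have hz' : z j ∈ {w : ℝ | Function.update z j w ∈ K} := by simpa using hz
  refine hline.ordConnected.uIcc_subset hz' hflip ?_
  rw [mem_uIcc]
  rcases le_total 0 (z j) with h | h
  · rw [abs_of_nonneg h, abs_le] at hv
    exact Or.inr hv
  · rw [abs_of_nonpos h, abs_le, neg_neg] at hv
    exact Or.inl hv

theorem Convex.isSolid_of_unconditional {ι : Type*} [Fintype ι] {K : Set (ι → ℝ)}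
    (hK : Convex ℝ K)
    (huncond : ∀ x ∈ K, ∀ ε : ι → ℝ, (∀ i, ε i = 1 ∨ ε i = -1) → (fun i => ε i * x i) ∈ K) :
    IsSolid K := by
  classical
  have hflip : ∀ z ∈ K, ∀ j, Function.update z j (-z j) ∈ K := fun z hz j => by
    convert huncond z hz (Function.update 1 j (-1))
      (fun i => by rcases eq_or_ne i j with rfl | hi <;> simp [*]) using 1
    ext i
    rcases eq_or_ne i j with rfl | hi <;> simp [*]
  intro x hx y hy
  suffices ∀ S : Finset ι, S.piecewise y x ∈ K by simpa using this Finset.univ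
  intro S
  induction S using Finset.induction_on with
  | empty => simpa using hx
  | insert a S ha ih =>
    rw [Finset.piecewise_insert]
    refine hK.update_mem_of_abs_le ih (hflip _ ih a) ?_
    rw [S.piecewise_eq_of_notMem _ _ ha]
    exact hy a

theorem abs_cons_le_abs_cons {n : ℕ} {a b : ℝ} {x y : Fin n → ℝ} (hab : |a| ≤ |b|)
    (hxy : |x| ≤ |y|) : |(Fin.cons a x : Fin (n + 1) → ℝ)| ≤ |Fin.cons b y| := fun i =>
  Fin.cases (by simpa using hab) (fun j => by simpa using hxy j) i

namespace LatticeOrderedAddCommGroup.IsSolid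

variable {n : ℕ} {A : Set (Fin (n + 1) → ℝ)}

theorem slice_subset_slice (hA : IsSolid A) {a b : ℝ} (hab : |a| ≤ |b|) :
    slice A b ⊆ slice A a := fun _ hy =>
  hA hy (abs_cons_le_abs_cons hab le_rfl)

theorem slice_neg (hA : IsSolid A) (s : ℝ) : slice A (-s) = slice A s :=
  (hA.slice_subset_slice (abs_neg s).ge).antisymm (hA.slice_subset_slice (abs_neg s).le)

theorem slice (hA : IsSolid A) (s : ℝ) : IsSolid (_root_.slice A s) := fun _ hx _ hxy =>
  hA hx (abs_cons_le_abs_cons le_rfl hxy)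

end LatticeOrderedAddCommGroup.IsSolid

theorem lamR_compl_smul_le_rpow {t : ℝ} (ht : 1 ≤ t) :
    ∀ {n : ℕ} {A : Set (Fin n → ℝ)}, MeasurableSet A → IsSolid A →
      lamR n (t • A)ᶜ ≤ lamR n Aᶜ ^ t
  | 0, A, _, _ => by
    rcases A.eq_empty_or_nonempty with rfl | hA
    · simp
    · rw [hA.eq_univ, smul_set_univ₀ (by positivity)]
      simp
  | n + 1, A, hA, hsolid => by
    have ht0 : 0 < t := one_pos.trans_le ht
    have hH_mono : MonotoneOn (fun s => lamR n (slice A s)ᶜ) (Ici 0) := fun a ha b hb hab =>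
      measure_mono (compl_subset_compl.mpr (hsolid.slice_subset_slice
        (by rwa [abs_of_nonneg (mem_Ici.mp ha), abs_of_nonneg (mem_Ici.mp hb)])))
    calc lamR (n + 1) (t • A)ᶜ
        = ∫⁻ s in Ioi 0, ENNReal.ofReal (exp (-s)) * lamR n (t • slice A (t⁻¹ * s))ᶜ := by
          rw [lamR_succ_of_slice_neg (hA.const_smul₀ t).compl fun s => by
            simp only [slice_compl, slice_smul ht0.ne', mul_neg, hsolid.slice_neg]]
          simp only [slice_compl, slice_smul ht0.ne']
      _ ≤ ∫⁻ s in Ioi 0, ENNReal.ofReal (exp (-s)) * lamR n (slice A (t⁻¹ * s))ᶜ ^ t :=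
          setLIntegral_mono' measurableSet_Ioi fun s _ => by
            gcongr
            exact lamR_compl_smul_le_rpow ht (hA.slice _) (hsolid.slice _)
      _ ≤ (∫⁻ s in Ioi 0, ENNReal.ofReal (exp (-s)) * lamR n (slice A s)ᶜ) ^ t :=
          setLIntegral_exp_neg_mul_rpow_le (measurable_lamR_slice hA.compl)
            (fun _ => prob_le_one) hH_mono ht
      _ = lamR (n + 1) Aᶜ ^ t := by
          rw [lamR_succ_of_slice_neg hA.compl fun s => by simp only [slice_compl, hsolid.slice_neg]]
          rfl

/-- **S-inequality for the exponential measure (dilation `t ≥ 1`).**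
For a closed convex unconditional `K ⊆ ℝⁿ` and a strip `P = {x : |x₁| ≤ p}` with
`λ_n(K) = λ_n(P)`, one has `λ_n(tK) ≥ λ_n(tP)` for all `t ≥ 1`. -/
theorem exponential_S_inequality_ge
    (n : ℕ) (hn : 0 < n) (K : Set (Fin n → ℝ)) (hK_closed : IsClosed K)
    (hK_conv : Convex ℝ K)
    (hK_uncond : ∀ x ∈ K, ∀ ε : Fin n → ℝ, (∀ i, ε i = 1 ∨ ε i = -1) →
      (fun i => ε i * x i) ∈ K)
    (p : ℝ) (hp : 0 ≤ p)
    (heq : lamR n K = lamR n {x | |x ⟨0, hn⟩| ≤ p}) :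
    ∀ t : ℝ, 1 ≤ t →
      lamR n (t • {x : Fin n → ℝ | |x ⟨0, hn⟩| ≤ p}) ≤ lamR n (t • K) := by
  intro t ht
  obtain ⟨m, rfl⟩ := Nat.exists_eq_add_one_of_ne_zero hn.ne'
  have hzero : (⟨0, hn⟩ : Fin (m + 1)) = 0 := rfl
  rw [hzero] at heq ⊢
  set P := {x : Fin (m + 1) → ℝ | |x 0| ≤ p}
  have ht0 : 0 < t := one_pos.trans_le ht
  have hK_meas : MeasurableSet K := hK_closed.measurableSet
  have hP_meas : MeasurableSet P := measurableSet_le (measurable_pi_apply 0).abs measurable_const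
  have hcompl : lamR _ (t • K)ᶜ ≤ lamR _ (t • P)ᶜ :=
    calc lamR _ (t • K)ᶜ ≤ lamR _ Kᶜ ^ t :=
          lamR_compl_smul_le_rpow ht hK_meas (hK_conv.isSolid_of_unconditional hK_uncond)
      _ = lamR _ Pᶜ ^ t := by
          rw [prob_compl_eq_one_sub hK_meas, heq, prob_compl_eq_one_sub hP_meas]
      _ = lamR _ (t • P)ᶜ := (lamR_compl_smul_setOf_abs_le ht0 hp).symm
  rw [← compl_compl (t • K), ← compl_compl (t • P),
    prob_compl_eq_one_sub (hK_meas.const_smul₀ t).compl,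
    prob_compl_eq_one_sub (hP_meas.const_smul₀ t).compl]
  exact tsub_le_tsub_left hcompl 1
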